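/- arXiv:math/0703370 — 2 statements merged into one kernel-verified Lean document; each statement's English description precedes it below -/
import Mathlib

section
/- For all natural numbers p ≥ 1, r ≥ 1 and q ≥ 0, the intersection matrix of the star-shaped weighted tree Λ_{p,q,r} — which has a central vertex of weight −2 and three legs attached to it: a leg consisting of a single vertex of weight −(p+2); a leg consisting of a single vertex of weight −(r+3); and a leg which is a path whose vertices, listed in order starting from the one adjacent to the central vertex, have weights −2 (repeated q times), −3, −2 (repeated r−1 times), −3, −2 (repeated p−1 times), −(q+4) — is negative definite. -/
/-- The vertex type of a star-shaped tree with `m` legs, leg `i` consisting of a path of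
`n i` vertices.  `none` is the central vertex; `some ⟨i, j⟩` is the `j`-th vertex of the
`i`-th leg (the vertex `j = 0` being the one joined to the central vertex by an edge). -/
abbrev StarVertex (m : ℕ) (n : Fin m → ℕ) : Type := Option ((i : Fin m) × Fin (n i))

/-- The intersection matrix of the star-shaped weighted tree with `m` legs, where the central
vertex has weight `w0` and the `j`-th vertex of the `i`-th leg has weight `w i j`:  diagonal
entries are the weights, off-diagonal entries are `1` for vertices joined by an edge
(consecutive vertices of a leg, or the central vertex and the initial vertex of a leg)
and `0` otherwise. -/
def starMatrix (m : ℕ) (n : Fin m → ℕ) (w0 : ℤ) (w : Fin m → ℕ → ℤ) :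
    Matrix (StarVertex m n) (StarVertex m n) ℤ :=
  Matrix.of fun v v' =>
    match v, v' with
    | none, none => w0
    | none, some ⟨_, j⟩ => if (j : ℕ) = 0 then 1 else 0
    | some ⟨_, j⟩, none => if (j : ℕ) = 0 then 1 else 0
    | some ⟨i, j⟩, some ⟨i', j'⟩ =>
        if (i : ℕ) = (i' : ℕ) then
          if (j : ℕ) = (j' : ℕ) then w i (j : ℕ)
          else if (j : ℕ) + 1 = (j' : ℕ) ∨ (j' : ℕ) + 1 = (j : ℕ) then 1 else 0
        else 0

/-- The weights along a leg consisting of a chain of `k` vertices of weight `-2` followed by a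
terminal vertex of weight `-a` (a path of `k + 1` vertices). -/
def chainW (k : ℕ) (a : ℤ) (j : ℕ) : ℤ := if j < k then -2 else -a

/-!
If `Q` is symmetric with nonnegative off-diagonal entries and some positive vector `z` has
`Q z < 0` componentwise, then `Q` is negative definite: by AM-GM,
`Q v w * x v * x w ≤ Q v w * (x v ^ 2 * z w / z v + x w ^ 2 * z v / z w) / 2`, and summing gives
`xᵀ Q x ≤ ∑ v, x v ^ 2 / z v * (Q z) v`.

For `Λ_{p,q,r}`, with `N` the length of the long leg and `c = (N + 1) ^ 2`, take `z = c - k ^ 2`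
at distance `k` from the centre along the long leg and `(c + 1) / a` on the single vertex
of weight `-a` of a short leg. Along the long leg `z` has second difference `-2` and vanishes one
step past the end, so every row there is at most `-2`; a short-leg row is `-1`; the central row
is `(c + 1) (1 / (p + 2) + 1 / (r + 3) - 1) < 0`.
-/

open Finset Matrix

theorem Matrix.sum_sum_mul_mul_neg_of_mulVec_neg {V : Type*} [Fintype V]
    {Q : Matrix V V ℝ} (hQ : Q.IsSymm) (hoff : Pairwise fun v w => 0 ≤ Q v w) {z : V → ℝ}
    (hz : ∀ v, 0 < z v) (hQz : ∀ v, (Q *ᵥ z) v < 0) {x : V → ℝ} (hx : x ≠ 0) :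
    ∑ v, ∑ w, Q v w * x v * x w < 0 := by
  have hsymm (v w : V) : Q w v = Q v w := hQ.apply v w
  set a : V → V → ℝ := fun v w => x v ^ 2 / z v * (Q v w * z w) with ha
  have hterm (v w : V) : Q v w * x v * x w ≤ (a v w + a w v) / 2 := by
    have hv := (hz v).ne'
    have hw := (hz w).ne'
    have key : (a v w + a w v) / 2 - Q v w * x v * x w
        = Q v w * (x v * z w - x w * z v) ^ 2 / (2 * z v * z w) := by
      simp only [ha, hsymm v w]; field_simp; ring
    have : 0 ≤ Q v w * (x v * z w - x w * z v) ^ 2 / (2 * z v * z w) := by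
      rcases eq_or_ne v w with rfl | hvw
      · simp
      · have := hz v; have := hz w; have := hoff hvw; positivity
    linarith
  obtain ⟨v₀, hv₀⟩ := Function.ne_iff.mp hx
  calc ∑ v, ∑ w, Q v w * x v * x w
    _ ≤ ∑ v, ∑ w, (a v w + a w v) / 2 := sum_le_sum fun v _ => sum_le_sum fun w _ => hterm v w
    _ = ∑ v, ∑ w, a v w := by
      simp only [add_div, sum_add_distrib]
      rw [sum_comm (f := fun v w => a w v / 2)]
      simp only [← sum_add_distrib, add_halves]
    _ = ∑ v, x v ^ 2 / z v * (Q *ᵥ z) v := by simp [ha, mulVec, dotProduct, mul_sum]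
    _ < 0 := by
      refine sum_neg' (fun v _ => ?_) ⟨v₀, mem_univ _, ?_⟩
      · exact mul_nonpos_of_nonneg_of_nonpos (by have := hz v; positivity) (hQz v).le
      · exact mul_neg_of_pos_of_neg (div_pos (sq_pos_of_ne_zero hv₀) (hz v₀)) (hQz v₀)

theorem sum_range_tridiag {N j : ℕ} (hj : j < N) (a : ℝ) (g : ℕ → ℝ) :
    ∑ k ∈ range N, (if j = k then a else if j + 1 = k ∨ k + 1 = j then 1 else 0) * g k
      = a * g j + (if j = 0 then 0 else g (j - 1)) + (if j + 1 < N then g (j + 1) else 0) := by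
  have hsplit (k : ℕ) : (if j = k then a else if j + 1 = k ∨ k + 1 = j then 1 else 0) * g k
      = (if j = k then a * g j else 0) + (if k + 1 = j then g k else 0)
        + (if j + 1 = k then g (j + 1) else 0) := by
    split_ifs <;> first | omega | (subst_vars; ring)
  simp only [hsplit, sum_add_distrib, sum_ite_eq, mem_range, if_pos hj]
  congr 2
  rcases j with _ | j
  · simp
  · simp [show j < N by omega]

/-- The test vector along a leg with `N` vertices, as a function of the distance `k` to the
centre. -/
def parabola (N k : ℕ) : ℝ := ((N : ℝ) + 1) ^ 2 - (k : ℝ) ^ 2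

theorem parabola_pos {N k : ℕ} (hk : k ≤ N) : 0 < parabola N k := by
  have : (k : ℝ) < N + 1 := by exact_mod_cast Nat.lt_succ_of_le hk
  unfold parabola; nlinarith [(k.cast_nonneg : (0 : ℝ) ≤ k)]

section StarMatrix

variable {m : ℕ} {n : Fin m → ℕ} {w0 : ℤ} {w : Fin m → ℕ → ℤ}

theorem starMatrix_isSymm : (starMatrix m n w0 w).IsSymm := by
  ext (_ | ⟨i, j⟩) (_ | ⟨i', j'⟩) <;> simp only [transpose_apply, starMatrix, of_apply]
  split_ifs with hi _ _ hj <;> try omega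
  obtain rfl := Fin.ext hi
  rw [hj]

theorem starMatrix_nonneg_of_ne : Pairwise fun v v' => 0 ≤ starMatrix m n w0 w v v' := by
  rintro (_ | ⟨i, j⟩) (_ | ⟨i', j'⟩) hne <;> simp only [starMatrix, of_apply]
  · exact absurd rfl hne
  · split_ifs <;> omega
  · split_ifs <;> omega
  · split_ifs with hi hj <;> try omega
    obtain rfl := Fin.ext hi
    obtain rfl := Fin.ext hj
    exact absurd rfl hne

def starVec (c : ℝ) (f : Fin m → ℕ → ℝ) : StarVertex m n → ℝ
  | none => c
  | some ⟨i, j⟩ => f i j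

theorem sum_starVertex {M : Type*} [AddCommMonoid M] (g : StarVertex m n → M) :
    ∑ v, g v = g none + ∑ i, ∑ j : Fin (n i), g (some ⟨i, j⟩) := by
  rw [Fintype.sum_option, Fintype.sum_sigma]

theorem starMatrix_mulVec_starVec_none (c : ℝ) (f : Fin m → ℕ → ℝ) :
    ((starMatrix m n w0 w).map (↑) *ᵥ starVec c f) none
      = w0 * c + ∑ i, if 0 < n i then f i 0 else 0 := by
  simp only [mulVec, dotProduct, sum_starVertex, map_apply, starMatrix, of_apply, starVec]
  congr 1
  refine sum_congr rfl fun i _ => ?_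
  rw [Fin.sum_univ_eq_sum_range (fun j => ((if j = 0 then 1 else 0 : ℤ) : ℝ) * f i j)]
  simp

theorem starMatrix_mulVec_starVec_some (c : ℝ) (f : Fin m → ℕ → ℝ) (i : Fin m)
    (j : Fin (n i)) :
    ((starMatrix m n w0 w).map (↑) *ᵥ starVec c f) (some ⟨i, j⟩)
      = w i j * f i j + (if (j : ℕ) = 0 then c else f i (j - 1))
        + (if (j : ℕ) + 1 < n i then f i (j + 1) else 0) := by
  simp only [mulVec, dotProduct, sum_starVertex, map_apply, starMatrix, of_apply, starVec]
  rw [sum_eq_single i (fun i' _ hi' => by simp [Fin.val_ne_of_ne hi'.symm]) (by simp)]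
  simp only [↓reduceIte]
  rw [Fin.sum_univ_eq_sum_range (fun k => ((if (j : ℕ) = k then w i j else
      if (j : ℕ) + 1 = k ∨ k + 1 = (j : ℕ) then 1 else 0 : ℤ) : ℝ) * f i k)]
  push_cast
  rw [sum_range_tridiag j.isLt]
  split_ifs <;> ring

theorem starMatrix_mulVec_starVec_parabola_neg {c : ℝ} {f : Fin m → ℕ → ℝ} {i : Fin m}
    (hc : c = parabola (n i) 0) (hf : ∀ k, f i k = parabola (n i) (k + 1)) (j : Fin (n i))
    (hw : w i j ≤ -2) :
    ((starMatrix m n w0 w).map (↑) *ᵥ starVec c f) (some ⟨i, j⟩) < 0 := by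
  have hpred : (if (j : ℕ) = 0 then c else f i (j - 1)) = parabola (n i) j := by
    split_ifs with h
    · rw [hc, h]
    · rw [hf, Nat.sub_add_cancel (Nat.one_le_iff_ne_zero.mpr h)]
  have hsucc :
      (if (j : ℕ) + 1 < n i then f i (j + 1) else 0) = parabola (n i) (j + 1 + 1) := by
    split_ifs with h
    · rw [hf]
    · rw [show (j : ℕ) + 1 = n i by omega, parabola]; push_cast; ring
  have hsecond :
      parabola (n i) j - 2 * parabola (n i) (j + 1) + parabola (n i) (j + 1 + 1) = -2 := by
    unfold parabola; push_cast; ring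
  have hw' : (w i j : ℝ) ≤ -2 := by exact_mod_cast hw
  rw [starMatrix_mulVec_starVec_some, hpred, hsucc, hf]
  nlinarith [parabola_pos (N := n i) (k := j + 1) j.isLt]

theorem starMatrix_mulVec_starVec_single_neg {c : ℝ} {f : Fin m → ℕ → ℝ} {i : Fin m}
    {a : ℤ} (ha : 0 < a) (hw : w i 0 = -a) (hf : f i 0 = (c + 1) / a) (hn : n i = 1)
    (j : Fin (n i)) :
    ((starMatrix m n w0 w).map (↑) *ᵥ starVec c f) (some ⟨i, j⟩) < 0 := by
  have hj : (j : ℕ) = 0 := by omega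
  have ha' : (0 : ℝ) < a := by exact_mod_cast ha
  rw [starMatrix_mulVec_starVec_some, hj, hw, hf, hn, if_pos rfl, if_neg (lt_irrefl 1)]
  field_simp
  push_cast
  linarith

end StarMatrix

theorem starMatrix_two_single_legs_sum_mul_mul_neg {N : ℕ} {a b : ℤ} (ha : 2 ≤ a)
    (hb : 3 ≤ b) {u : ℕ → ℤ} (hu : ∀ j < N + 1, u j ≤ -2)
    {x : StarVertex 3 ![1, 1, N + 1] → ℝ} (hx : x ≠ 0) :
    ∑ v, ∑ v', ((starMatrix 3 ![1, 1, N + 1] (-2) ![fun _ => -a, fun _ => -b, u] v v' : ℤ)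
      : ℝ) * x v * x v' < 0 := by
  have ha' : (2 : ℝ) ≤ a := by exact_mod_cast ha
  have hb' : (3 : ℝ) ≤ b := by exact_mod_cast hb
  set c := parabola (N + 1) 0
  have hc : 0 < c := parabola_pos (Nat.zero_le _)
  refine sum_sum_mul_mul_neg_of_mulVec_neg
    (Q := (starMatrix 3 ![1, 1, N + 1] (-2) ![fun _ => -a, fun _ => -b, u]).map (↑))
    (starMatrix_isSymm.map _)
    (fun v w h => Int.cast_nonneg_iff.mpr (starMatrix_nonneg_of_ne h))
    (z := starVec c ![fun _ => (c + 1) / a, fun _ => (c + 1) / b,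
      fun j => parabola (N + 1) (j + 1)]) ?_ ?_ hx
  · rintro (_ | ⟨i, j⟩)
    · exact hc
    fin_cases i
    · show 0 < (c + 1) / a; positivity
    · show 0 < (c + 1) / b; positivity
    · exact parabola_pos j.isLt
  · rintro (_ | ⟨i, j⟩)
    · have hpar : parabola (N + 1) 1 = c - 1 := by simp only [c, parabola]; push_cast; ring
      have hca : (c + 1) / a ≤ (c + 1) / 2 :=
        div_le_div_of_nonneg_left (by positivity) two_pos ha'
      have hcb : (c + 1) / b ≤ (c + 1) / 3 :=
        div_le_div_of_nonneg_left (by positivity) three_pos hb'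
      rw [starMatrix_mulVec_starVec_none]
      simp only [Fin.sum_univ_three, cons_val_zero, cons_val_one, cons_val_two, tail_cons,
        head_cons, Nat.zero_lt_succ, ↓reduceIte, zero_add, hpar]
      push_cast
      linarith
    fin_cases i
    · exact starMatrix_mulVec_starVec_single_neg (by omega) rfl rfl rfl j
    · exact starMatrix_mulVec_starVec_single_neg (by omega) rfl rfl rfl j
    · exact starMatrix_mulVec_starVec_parabola_neg rfl (fun _ => rfl) j (hu j j.isLt)

theorem Lambda_pqr_negative_definite_general (p q r : ℕ) :
    ∀ x : StarVertex 3 ![1, 1, q + r + p + 1] → ℝ, x ≠ 0 →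
      ∑ v, ∑ v', ((starMatrix 3 ![1, 1, q + r + p + 1] (-2)
          ![fun _ => -((p : ℤ) + 2),
            fun _ => -((r : ℤ) + 3),
            fun j => if j < q then -2 else if j = q then -3 else
              if j < q + r then -2 else if j = q + r then -3 else
              if j < q + r + p then -2 else -((q : ℤ) + 4)] v v' : ℤ) : ℝ)
          * x v * x v' < 0 := by
  intro x hx
  exact starMatrix_two_single_legs_sum_mul_mul_neg (N := q + r + p) (by omega) (by omega)
    (fun j _ => by split_ifs <;> omega) hx

/-- The intersection matrix of the star-shaped weighted tree `Λ_{p,q,r}` for `p, r ≥ 1`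
(central vertex of weight `-2`; legs: a single vertex of weight `-(p+2)`; a single vertex of
weight `-(r+3)`; and a path with weights `-2` (`q` times), `-3`, `-2` (`r-1` times), `-3`,
`-2` (`p-1` times), `-(q+4)`) is negative definite. -/
theorem Lambda_pqr_negative_definite (p q r : ℕ) (hp : 1 ≤ p) (hr : 1 ≤ r) :
    ∀ x : StarVertex 3 ![1, 1, q + r + p + 1] → ℝ, x ≠ 0 →
      ∑ v, ∑ v', ((starMatrix 3 ![1, 1, q + r + p + 1] (-2)
          ![fun _ => -((p : ℤ) + 2),
            fun _ => -((r : ℤ) + 3),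
            fun j => if j < q then -2 else if j = q then -3 else
              if j < q + r then -2 else if j = q + r then -3 else
              if j < q + r + p then -2 else -((q : ℤ) + 4)] v v' : ℤ) : ℝ)
          * x v * x v' < 0 :=
  Lambda_pqr_negative_definite_general p q r
end

section
/- For all natural numbers r ≥ 1 and q ≥ 0, the intersection matrix of the star-shaped weighted tree Λ_{0,q,r} — which has a central vertex of weight −2 and three legs attached to it: a leg consisting of a single vertex of weight −2; a leg consisting of a single vertex of weight −(r+3); and a leg which is a path whose vertices, listed in order starting from the one adjacent to the central vertex, have weights −2 (repeated q times), −3, −2 (repeated r−1 times), −(q+5) — is negative definite. -/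
/-!
Completing squares along a leg, starting from its far end, shows that a chain of weights
`≤ -2` joined to the central vertex contributes at most `x_c ^ 2 / P` to the quadratic form,
where `x_c` is the value at the centre and `P ≥ 1` is the Hirzebruch–Jung continued fraction
of the leg; when `x_c = 0` a leg on which `x` is not identically zero contributes a negative
amount. Hence a star is negative definite as soon as `∑ 1 / P_i < -w_0`. For `Λ_{0,q,r}` the
legs give `1/2 + 1/(r+3) + 1/P ≤ 1/2 + 1/3 + 1 < 2`.
-/

open Finset

/-- The Hirzebruch–Jung continued fraction `[-W 0, …, -W k] = -W 0 - 1 / [-W 1, …, -W k]`: the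
pivot at vertex `0` of Gaussian elimination on the chain `W 0, …, W k` from its far end. -/
noncomputable def chainPivot (W : ℕ → ℝ) : ℕ → ℝ
  | 0 => -W 0
  | k + 1 => -W 0 - (chainPivot (fun j => W (j + 1)) k)⁻¹

theorem one_le_chainPivot {W : ℕ → ℝ} {k : ℕ} (hW : ∀ j ≤ k, W j ≤ -2) :
    1 ≤ chainPivot W k := by
  induction k generalizing W with
  | zero => simp only [chainPivot]; linarith [hW 0 le_rfl]
  | succ k ih =>
    have hinv := inv_le_one_of_one_le₀ (ih fun j hj => hW (j + 1) (by omega))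
    simp only [chainPivot]
    linarith [hW 0 (Nat.zero_le _)]

/-- The contribution of a leg of `n` vertices (values `y (j + 1)`) together with its edge to the
centre (value `y 0`). -/
def legForm (W : ℕ → ℝ) (n : ℕ) (y : ℕ → ℝ) : ℝ :=
  ∑ j ∈ range n, (W j * y (j + 1) ^ 2 + 2 * y j * y (j + 1))

theorem legForm_succ (W : ℕ → ℝ) (n : ℕ) (y : ℕ → ℝ) :
    legForm W (n + 1) y =
      W 0 * y 1 ^ 2 + 2 * y 0 * y 1 + legForm (fun j => W (j + 1)) n (fun j => y (j + 1)) := by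
  rw [legForm, sum_range_succ', legForm, add_comm]

theorem two_mul_sub_mul_sq_le {P : ℝ} (hP : 0 < P) (a b : ℝ) :
    2 * a * b - P * b ^ 2 ≤ a ^ 2 / P := by
  have hsq : a ^ 2 / P - (2 * a * b - P * b ^ 2) = (a - P * b) ^ 2 / P := by
    field_simp
    ring
  linarith [div_nonneg (sq_nonneg (a - P * b)) hP.le]

theorem legForm_le {W : ℕ → ℝ} {k : ℕ} (hW : ∀ j ≤ k, W j ≤ -2) (y : ℕ → ℝ) :
    legForm W (k + 1) y ≤ 2 * y 0 * y 1 - chainPivot W k * y 1 ^ 2 := by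
  induction k generalizing W y with
  | zero => simp only [legForm, zero_add, range_one, sum_singleton, chainPivot]; linarith
  | succ k ih =>
    have hW' : ∀ j ≤ k, W (j + 1) ≤ -2 := fun j hj => hW (j + 1) (by omega)
    have htail := ih hW' fun j => y (j + 1)
    -- the tail's contribution is bounded by `y 1 ^ 2 / P'`, which the recursion absorbs into `P`
    have hsq := two_mul_sub_mul_sq_le (by linarith [one_le_chainPivot hW']) (y 1) (y 2)
    rw [div_eq_mul_inv] at hsq
    rw [legForm_succ, chainPivot]
    linarith

theorem legForm_le_sq_div {W : ℕ → ℝ} {n : ℕ} (hn : 0 < n) (hW : ∀ j < n, W j ≤ -2)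
    (y : ℕ → ℝ) : legForm W n y ≤ y 0 ^ 2 / chainPivot W (n - 1) := by
  obtain ⟨k, rfl⟩ := Nat.exists_eq_succ_of_ne_zero hn.ne'
  have hW' : ∀ j ≤ k, W j ≤ -2 := fun j hj => hW j (Nat.lt_succ_of_le hj)
  exact (legForm_le hW' y).trans
    (two_mul_sub_mul_sq_le (by linarith [one_le_chainPivot hW']) (y 0) (y 1))

theorem legForm_neg {W : ℕ → ℝ} {n : ℕ} (hW : ∀ j < n, W j ≤ -2) {y : ℕ → ℝ}
    (hy0 : y 0 = 0) (hy : ∃ j < n, y (j + 1) ≠ 0) : legForm W n y < 0 := by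
  induction n generalizing W y with
  | zero => obtain ⟨j, hj, -⟩ := hy; omega
  | succ n ih =>
    by_cases hy1 : y 1 = 0
    · obtain ⟨j, hj, hyj⟩ := hy
      obtain ⟨j, rfl⟩ : ∃ i, j = i + 1 :=
        Nat.exists_eq_succ_of_ne_zero fun h => hyj (h ▸ hy1)
      rw [legForm_succ, hy0, hy1]
      simpa using ih (fun j hj => hW (j + 1) (by omega)) hy1 ⟨j, by omega, hyj⟩
    · have hW' : ∀ j ≤ n, W j ≤ -2 := fun j hj => hW j (Nat.lt_succ_of_le hj)
      have hP := one_le_chainPivot hW'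
      have hle := legForm_le hW' y
      rw [hy0] at hle
      nlinarith [sq_pos_of_ne_zero hy1]

theorem sum_path_quadForm (W z : ℕ → ℝ) {n : ℕ} (hz : z n = 0) :
    ∑ j ∈ range n, ∑ j' ∈ range n,
        (if j = j' then W j else if j + 1 = j' ∨ j' + 1 = j then 1 else 0) * z j * z j' =
      ∑ j ∈ range n, (W j * z j ^ 2 + 2 * z j * z (j + 1)) := by
  have hentry : ∀ j j', (if j = j' then W j else if j + 1 = j' ∨ j' + 1 = j then 1 else 0) *
      z j * z j' = (if j' = j then W j * z j ^ 2 else 0) +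
        (if j' = j + 1 then z j * z j' else 0) + (if j = j' + 1 then z j' * z j else 0) := by
    intro j j'
    split_ifs <;> first | omega | (subst_vars; ring)
  have hdiag : ∑ j ∈ range n, ∑ j' ∈ range n, (if j' = j then W j * z j ^ 2 else 0) =
      ∑ j ∈ range n, W j * z j ^ 2 :=
    sum_congr rfl fun j hj => by rw [sum_ite_eq', if_pos hj]
  have hnext : ∑ j ∈ range n, ∑ j' ∈ range n, (if j' = j + 1 then z j * z j' else 0) =
      ∑ j ∈ range n, z j * z (j + 1) := by
    refine sum_congr rfl fun j hj => ?_
    rw [sum_ite_eq']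
    split_ifs with h
    · rfl
    · rw [show j + 1 = n by simp only [mem_range] at hj h; omega, hz, mul_zero]
  have hprev : ∑ j ∈ range n, ∑ j' ∈ range n, (if j = j' + 1 then z j' * z j else 0) =
      ∑ j ∈ range n, z j * z (j + 1) := by
    rw [sum_comm, ← hnext]
  simp only [hentry, sum_add_distrib]
  rw [hdiag, hnext, hprev, ← sum_add_distrib, ← sum_add_distrib, ← sum_add_distrib]
  exact sum_congr rfl fun j _ => by ring

theorem legForm_eq_of_succ_eq_zero (W : ℕ → ℝ) {n : ℕ} {y : ℕ → ℝ} (hy : y (n + 1) = 0) :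
    legForm W n y =
      2 * y 0 * y 1 + ∑ j ∈ range n, (W j * y (j + 1) ^ 2 + 2 * y (j + 1) * y (j + 1 + 1)) := by
  induction n generalizing W y with
  | zero => simp [legForm, hy]
  | succ n ih =>
    rw [legForm_succ, ih _ hy, sum_range_succ']
    ring

section Star

variable {m : ℕ} {n : Fin m → ℕ}

/-- The values of `x` along leg `i`: index `0` is the central vertex, index `j + 1` the `j`-th
vertex of the leg, and the values are `0` beyond the end of the leg. -/
def legValues (x : StarVertex m n → ℝ) (i : Fin m) : ℕ → ℝ
  | 0 => x none
  | j + 1 => if h : j < n i then x (some ⟨i, ⟨j, h⟩⟩) else 0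

theorem legValues_succ (x : StarVertex m n → ℝ) (i : Fin m) (j : Fin (n i)) :
    legValues x i (j + 1) = x (some ⟨i, j⟩) := by
  simp [legValues]

theorem legValues_of_le (x : StarVertex m n → ℝ) {i : Fin m} {j : ℕ} (h : n i ≤ j) :
    legValues x i (j + 1) = 0 := by
  simp [legValues, h.not_gt]

theorem sum_centre_edges (x : StarVertex m n → ℝ) (i : Fin m) :
    ∑ j : Fin (n i), (if (j : ℕ) = 0 then x none * x (some ⟨i, j⟩) else 0) =
      x none * legValues x i 1 := by
  rcases Nat.eq_zero_or_pos (n i) with h | h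
  · have : IsEmpty (Fin (n i)) := by rw [h]; infer_instance
    simp [legValues_of_le x h.le]
  · rw [Fintype.sum_eq_single ⟨0, h⟩ fun j hj => if_neg fun h0 => hj (Fin.ext h0)]
    simp [legValues, h]

theorem starMatrix_quadForm_eq (w0 : ℤ) (w : Fin m → ℕ → ℤ) (x : StarVertex m n → ℝ) :
    ∑ v, ∑ v', ((starMatrix m n w0 w v v' : ℤ) : ℝ) * x v * x v' =
      w0 * x none ^ 2 + ∑ i, legForm (fun j => (w i j : ℝ)) (n i) (legValues x i) := by
  simp only [Fintype.sum_option, Fintype.sum_sigma, starMatrix, Matrix.of_apply, Int.cast_ite,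
    Int.cast_zero, Int.cast_one, ite_mul, zero_mul, one_mul, sum_ite_irrel, sum_const_zero,
    Fin.val_inj, sum_ite_eq, mem_univ, if_true]
  rw [add_assoc, ← sum_add_distrib, sq, mul_assoc]
  congr 1
  refine sum_congr rfl fun i _ => ?_
  have hpath := sum_path_quadForm (fun j => (w i j : ℝ)) (fun j => legValues x i (j + 1))
    (legValues_of_le x le_rfl)
  simp only [Finset.sum_range, legValues_succ, ite_mul, zero_mul, one_mul, Fin.val_inj] at hpath
  rw [sum_add_distrib, hpath, legForm_eq_of_succ_eq_zero _ (legValues_of_le x le_rfl),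
    Finset.sum_range]
  simp only [legValues_succ, mul_comm (x (some _)) (x none), sum_centre_edges]
  simp only [legValues]
  ring

theorem starMatrix_quadForm_neg {w0 : ℤ} {w : Fin m → ℕ → ℤ} (hn : ∀ i, 0 < n i)
    (hw : ∀ i, ∀ j < n i, w i j ≤ -2)
    (hcentre : ∑ i, (chainPivot (fun j => (w i j : ℝ)) (n i - 1))⁻¹ < -w0)
    (x : StarVertex m n → ℝ) (hx : x ≠ 0) :
    ∑ v, ∑ v', ((starMatrix m n w0 w v v' : ℤ) : ℝ) * x v * x v' < 0 := by
  have hW : ∀ i, ∀ j < n i, (w i j : ℝ) ≤ -2 := fun i j hj => by exact_mod_cast hw i j hj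
  rw [starMatrix_quadForm_eq]
  by_cases hc : x none = 0
  · obtain ⟨_ | ⟨i, j⟩, hxv⟩ := Function.ne_iff.mp hx
    · exact absurd hc hxv
    have hleg_le : ∀ i', legForm (fun j => (w i' j : ℝ)) (n i') (legValues x i') ≤ 0 := by
      intro i'
      simpa [legValues, hc] using legForm_le_sq_div (hn i') (hW i') (legValues x i')
    have hleg_neg : legForm (fun j => (w i j : ℝ)) (n i) (legValues x i) < 0 :=
      legForm_neg (hW i) hc ⟨j, j.2, by rwa [legValues_succ]⟩
    rw [hc, sq, mul_zero, mul_zero, zero_add]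
    calc ∑ i, legForm (fun j => (w i j : ℝ)) (n i) (legValues x i) < ∑ _i : Fin m, (0 : ℝ) :=
          sum_lt_sum (fun i' _ => hleg_le i') ⟨i, mem_univ _, hleg_neg⟩
      _ = 0 := sum_const_zero
  · calc (w0 : ℝ) * x none ^ 2 + ∑ i, legForm (fun j => (w i j : ℝ)) (n i) (legValues x i)
        ≤ w0 * x none ^ 2 + ∑ i, x none ^ 2 / chainPivot (fun j => (w i j : ℝ)) (n i - 1) := by
          gcongr with i
          exact legForm_le_sq_div (hn i) (hW i) _
      _ = (w0 + ∑ i, (chainPivot (fun j => (w i j : ℝ)) (n i - 1))⁻¹) * x none ^ 2 := by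
          simp only [add_mul, sum_mul, div_eq_inv_mul]
      _ < 0 := mul_neg_of_neg_of_pos (by linarith) (by positivity)

end Star

theorem Lambda_0qr_negative_definite_general (q r : ℕ) :
    ∀ x : StarVertex 3 ![1, 1, q + r + 1] → ℝ, x ≠ 0 →
      ∑ v, ∑ v', ((starMatrix 3 ![1, 1, q + r + 1] (-2)
          ![fun _ => -2,
            fun _ => -((r : ℤ) + 3),
            fun j => if j < q then -2 else if j = q then -3 else
              if j < q + r then -2 else -((q : ℤ) + 5)] v v' : ℤ) : ℝ)
          * x v * x v' < 0 := by
  have hlong : ∀ j, (if j < q then -2 else if j = q then -3 else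
      if j < q + r then -2 else -((q : ℤ) + 5)) ≤ -2 := by
    intro j
    split_ifs <;> omega
  refine starMatrix_quadForm_neg (fun i => by fin_cases i <;> simp) ?_ ?_
  · intro i j _
    fin_cases i
    exacts [le_rfl, by simp, hlong j]
  · rw [Fin.sum_univ_three]
    refine (add_le_add le_rfl (inv_le_one_of_one_le₀ (one_le_chainPivot fun j _ => ?_))).trans_lt ?_
    · exact_mod_cast hlong j
    · have hr : ((r : ℝ) + 3)⁻¹ ≤ 3⁻¹ := by gcongr; linarith [(r.cast_nonneg : (0 : ℝ) ≤ r)]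
      norm_num [chainPivot]
      linarith

/-- The intersection matrix of the star-shaped weighted tree `Λ_{0,q,r}` for `r ≥ 1` (central
vertex of weight `-2`; legs: a single vertex of weight `-2`; a single vertex of weight
`-(r+3)`; and a path with weights `-2` (`q` times), `-3`, `-2` (`r-1` times), `-(q+5)`)
is negative definite. -/
theorem Lambda_0qr_negative_definite (q r : ℕ) (hr : 1 ≤ r) :
    ∀ x : StarVertex 3 ![1, 1, q + r + 1] → ℝ, x ≠ 0 →
      ∑ v, ∑ v', ((starMatrix 3 ![1, 1, q + r + 1] (-2)
          ![fun _ => -2,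
            fun _ => -((r : ℤ) + 3),
            fun j => if j < q then -2 else if j = q then -3 else
              if j < q + r then -2 else -((q : ℤ) + 5)] v v' : ℤ) : ℝ)
          * x v * x v' < 0 :=
  Lambda_0qr_negative_definite_general q r
end
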